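/- arXiv:1404.2653 — 3 statements merged into one kernel-verified Lean document; each statement's English description precedes it below -/
import Mathlib

section
/- For every real θ, |cos(θ - π/2)| + |cos(θ - π/6)| + |cos(θ + π/6)| ≤ 2. -/
/-!
Since `cos x + cos (x + 2π/3) = cos (x + π/3)`, the middle cosine is the sum of the other two.
For any reals `a`, `b`, the sum `|a| + |b| + |a + b|` is twice the largest of its three terms:
if `a` and `b` have the same sign the largest is `|a + b| = |a| + |b|`, otherwise
`|a + b| = ||a| - |b||`. All three terms are cosines, hence at most `1`.
-/

open Real

lemma abs_add_abs_add_abs_add_le {a b M : ℝ} (ha : |a| ≤ M) (hb : |b| ≤ M)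
    (hab : |a + b| ≤ M) : |a| + |a + b| + |b| ≤ 2 * M := by
  rcases abs_cases a with ⟨ea, _⟩ | ⟨ea, _⟩ <;> rcases abs_cases b with ⟨eb, _⟩ | ⟨eb, _⟩ <;>
    rcases abs_cases (a + b) with ⟨eab, _⟩ | ⟨eab, _⟩ <;> linarith

lemma Real.cos_add_cos_add_two_pi_div_three (x : ℝ) :
    cos x + cos (x + 2 * π / 3) = cos (x + π / 3) := by
  rw [cos_add_cos, show (x - (x + 2 * π / 3)) / 2 = -(π / 3) by ring, cos_neg, cos_pi_div_three]
  ring_nf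

theorem stmt_2 (θ : ℝ) :
    |Real.cos (θ - Real.pi / 2)| + |Real.cos (θ - Real.pi / 6)| +
      |Real.cos (θ + Real.pi / 6)| ≤ 2 := by
  have hsum : cos (θ - π / 6) = cos (θ - π / 2) + cos (θ + π / 6) := by
    have h := cos_add_cos_add_two_pi_div_three (θ - π / 2)
    rw [show θ - π / 2 + 2 * π / 3 = θ + π / 6 by ring,
      show θ - π / 2 + π / 3 = θ - π / 6 by ring] at h
    exact h.symm
  have hmid := abs_cos_le_one (θ - π / 6)
  rw [hsum] at hmid ⊢
  simpa using abs_add_abs_add_abs_add_le (abs_cos_le_one _) (abs_cos_le_one _) hmid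
end

section
/- Define g(δ) = (sqrt(1 + (1+δ)^2) + sqrt(1 + (1-δ)^2))/(2*sqrt 2) - 1. Then g(δ)/δ^2 tends to 1/8 as δ tends to 0 from the right. -/
/-!
Put `a = √(1 + (1 + δ)²)`, `b = √(1 + (1 - δ)²)`. Since `ab = √(4 + δ⁴)`, rationalizing twice gives
`a + b - 2√2 = ((a + b)² - 8) / (a + b + 2√2) = δ² (2 + 2δ² / (√(4 + δ⁴) + 2)) / (a + b + 2√2)`,
so `g δ / δ²` is, for `δ ≠ 0`, a function continuous everywhere whose value at `0` is
`2 / (4√2 · 2√2) = 1/8`.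
-/

open Real Filter Topology

noncomputable def sqrtSum (δ : ℝ) : ℝ := √(1 + (1 + δ) ^ 2) + √(1 + (1 - δ) ^ 2)

noncomputable def sqrtSumQuot (δ : ℝ) : ℝ :=
  (2 + 2 * δ ^ 2 / (√(4 + δ ^ 4) + 2)) / (sqrtSum δ + 2 * √2)

lemma sqrt_one_add_sq_mul_sqrt (δ : ℝ) :
    √(1 + (1 + δ) ^ 2) * √(1 + (1 - δ) ^ 2) = √(4 + δ ^ 4) := by
  rw [← sqrt_mul (by positivity)]
  ring_nf

lemma sqrtSum_sq (δ : ℝ) : sqrtSum δ ^ 2 = 4 + 2 * δ ^ 2 + 2 * √(4 + δ ^ 4) := by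
  rw [sqrtSum, add_sq, ← sqrt_one_add_sq_mul_sqrt, sq_sqrt (by positivity),
    sq_sqrt (by positivity)]
  ring

lemma sqrt_four_add_pow_four_sub_two (δ : ℝ) :
    √(4 + δ ^ 4) - 2 = δ ^ 4 / (√(4 + δ ^ 4) + 2) := by
  rw [eq_div_iff (by positivity)]
  linear_combination sq_sqrt (by positivity : (0 : ℝ) ≤ 4 + δ ^ 4)

lemma sqrtSum_sub_two_sqrt_two (δ : ℝ) : sqrtSum δ - 2 * √2 = δ ^ 2 * sqrtSumQuot δ := by
  have hpos : 0 < sqrtSum δ + 2 * √2 := by unfold sqrtSum; positivity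
  rw [sqrtSumQuot, mul_div_assoc', eq_div_iff hpos.ne']
  linear_combination sqrtSum_sq δ + 2 * sqrt_four_add_pow_four_sub_two δ
    - 4 * sq_sqrt (by norm_num : (0 : ℝ) ≤ 2)

lemma continuous_sqrtSumQuot : Continuous sqrtSumQuot := by
  unfold sqrtSumQuot sqrtSum
  refine .div (continuous_const.add (.div (by fun_prop) (by fun_prop) fun δ => ?_)) (by fun_prop)
    fun δ => ?_ <;> positivity

lemma sqrtSumQuot_zero : sqrtSumQuot 0 = √2 / 4 := by
  have h4 : √4 = 2 := by rw [show (4 : ℝ) = 2 ^ 2 by norm_num, sqrt_sq zero_le_two]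
  simp only [sqrtSumQuot, sqrtSum]
  norm_num [h4]
  field_simp
  norm_num

theorem stmt_4 (g : ℝ → ℝ)
    (hg : ∀ δ : ℝ, g δ =
      (Real.sqrt (1 + (1 + δ) ^ 2) + Real.sqrt (1 + (1 - δ) ^ 2)) / (2 * Real.sqrt 2) - 1) :
    Filter.Tendsto (fun δ => g δ / δ ^ 2) (nhdsWithin 0 (Set.Ioi 0)) (nhds (1 / 8)) := by
  have hquot : ∀ δ ≠ 0, g δ / δ ^ 2 = sqrtSumQuot δ / (2 * √2) := by
    intro δ hδ
    rw [hg, ← sqrtSum, div_sub_one (by positivity), sqrtSum_sub_two_sqrt_two]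
    field_simp
  have hlim : Tendsto (fun δ => sqrtSumQuot δ / (2 * √2)) (𝓝 0) (𝓝 (1 / 8)) := by
    have hval : sqrtSumQuot 0 / (2 * √2) = 1 / 8 := by
      rw [sqrtSumQuot_zero]
      field_simp
      norm_num
    rw [← hval]
    exact (continuous_sqrtSumQuot.div_const _).tendsto 0
  exact (hlim.mono_left nhdsWithin_le_nhds).congr' <|
    eventually_nhdsWithin_of_forall fun δ hδ => (hquot δ (ne_of_gt hδ)).symm
end

section
/- For any integer k ≥ 2 and ω ∈ [0, π/k], one has π/k - cos ω · sin ω + sin²ω / tan(π/k) > 0. -/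
open Real

theorem cos_mul_sin_lt_self {x : ℝ} (hx : 0 < x) : cos x * sin x < x := by
  have h := sin_lt (by positivity : 0 < 2 * x)
  rw [sin_two_mul] at h
  linarith

theorem cos_mul_sin_lt_of_nonneg_of_le {a ω : ℝ} (ha : 0 < a) (hω : 0 ≤ ω) (hωa : ω ≤ a) :
    cos ω * sin ω < a := by
  rcases hω.eq_or_lt with rfl | hω
  · simpa using ha
  · exact (cos_mul_sin_lt_self hω).trans_le hωa

theorem sub_cos_mul_sin_add_sin_sq_div_tan_pos {a ω : ℝ} (ha : 0 < a) (htan : 0 ≤ tan a)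
    (hω : 0 ≤ ω) (hωa : ω ≤ a) : 0 < a - cos ω * sin ω + sin ω ^ 2 / tan a := by
  have hlt := cos_mul_sin_lt_of_nonneg_of_le ha hω hωa
  have hquot : 0 ≤ sin ω ^ 2 / tan a := by positivity
  linarith

theorem stmt_14 (k : ℕ) (hk : 2 ≤ k) (ω : ℝ) (hω : 0 ≤ ω) (hω' : ω ≤ Real.pi / k) :
    0 < Real.pi / k - Real.cos ω * Real.sin ω +
      Real.sin ω ^ 2 / Real.tan (Real.pi / k) := by
  have hle : π / k ≤ π / 2 :=
    div_le_div_of_nonneg_left pi_pos.le two_pos (by exact_mod_cast hk)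
  have htan : 0 ≤ tan (π / k) := tan_nonneg_of_nonneg_of_le_pi_div_two (by positivity) hle
  exact sub_cos_mul_sin_add_sin_sq_div_tan_pos (by positivity) htan hω hω'
end
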